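/- Let (X,T) be a non-periodic linearly recurrent minimal subshift with constant K, and let (Y,T) be a non-periodic subshift factor of (X,T). Then (Y,T) is linearly recurrent, and there exists n₁ such that for every u ∈ L(Y) with |u| ≥ n₁: (1) every return word w ∈ R_u(Y) satisfies |u|/(2K) ≤ |w| ≤ 2K|u|; (2) #R_u(Y) ≤ 2K(2K+1)². -/

import Mathlib

/-
Write `y = φ x` for a linearly recurrent point `x` of `X`. Since `X` is compact and `B` discrete,
`φ` is a sliding block code with some window `r`: `y i` depends only on `x_{[i, i+r)}`. Hence a
factor of `y` of length `n` is the image of a factor of `x` of length `n + r`, and reappears in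
every window of `y` of length `K (n + r)`; this bounds return words by `K (|u| + r) ≤ 2K|u|`.
Conversely, if `u` occurs at distance `p` with `|u| > K (p + r + 1)`, this recurrence spreads the
period `p` of the overlap to all of `y`; but a periodic `y` has a finite orbit closure, and that
closure contains the infinite `Y`. Hence `|u| ≤ K (|w| + r + 1) ≤ 2K|w|` once `|u| > K (2r + 1)`.
Finally every return word to `u` is read off at an occurrence of `u` in a fixed initial segment
of `y` of length `O(K² |u|)`, where occurrences of `u` are `|u|/2K` apart.
-/

/-- The factor `x_{[i, i+n)}` of a sequence. -/
def factorAt {A : Type*} (x : ℕ → A) (i n : ℕ) : List A := (List.range n).map fun k => x (i + k)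

/-- `i` is an occurrence of the word `u` in the sequence `x`. -/
def OccursAt {A : Type*} (x : ℕ → A) (u : List A) (i : ℕ) : Prop := factorAt x i u.length = u

/-- `u` is a factor of `x`. -/
def IsFactor {A : Type*} (x : ℕ → A) (u : List A) : Prop := ∃ i, OccursAt x u i

/-- `u` occurs in `x` with bounded gaps (its set of occurrences is syndetic). -/
def BoundedGaps {A : Type*} (x : ℕ → A) (u : List A) : Prop :=
  ∃ g, 0 < g ∧ ∀ i, ∃ j, i ≤ j ∧ j < i + g ∧ OccursAt x u j

/-- `x` is uniformly recurrent: every factor occurs with bounded gaps. -/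
def UniformlyRecurrent {A : Type*} (x : ℕ → A) : Prop :=
  ∀ u, IsFactor x u → BoundedGaps x u

/-- `w` is a return word to `u` in `x`: `w = x_{[j,k)}` for consecutive
occurrences `j < k` of `u` in `x`. -/
def IsReturnWord {A : Type*} (x : ℕ → A) (u w : List A) : Prop :=
  ∃ j k, j < k ∧ OccursAt x u j ∧ OccursAt x u k ∧
    (∀ m, j < m → m < k → ¬ OccursAt x u m) ∧ w = factorAt x j (k - j)

/-- `x` is linearly recurrent with constant `K`: it is uniformly recurrent and every
return word `w` to every nonempty factor `u` satisfies `|w| ≤ K|u|`. -/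
def LinearlyRecurrent {A : Type*} (x : ℕ → A) (K : ℕ) : Prop :=
  UniformlyRecurrent x ∧ ∀ u w, u ≠ [] → IsReturnWord x u w → w.length ≤ K * u.length

/-- `x` is ultimately periodic. -/
def UltimatelyPeriodic {A : Type*} (x : ℕ → A) : Prop :=
  ∃ N t, 0 < t ∧ ∀ n, N ≤ n → x (n + t) = x n
/-- The shift transformation on one-sided sequences. -/
def shift {A : Type*} (x : ℕ → A) : ℕ → A := fun n => x (n + 1)

/-- The language of (the elements of) a subshift. -/
def LangOf {A : Type*} (X : Set (ℕ → A)) : Set (List A) := { w | ∃ x ∈ X, IsFactor x w }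

/-- The set of return words to `u` in the subshift `X`. -/
def ReturnWordsOf {A : Type*} (X : Set (ℕ → A)) (u : List A) : Set (List A) :=
  { w | ∃ x ∈ X, IsReturnWord x u w }
section TopoDefs

variable {A : Type*} [TopologicalSpace A] {B : Type*} [TopologicalSpace B]

/-- A subshift: a closed, shift-invariant set of sequences. -/
def IsSubshift (X : Set (ℕ → A)) : Prop := IsClosed X ∧ ∀ x ∈ X, shift x ∈ X

/-- A minimal subshift: the only closed shift-invariant subsets are `∅` and `X`. -/
def IsMinimalSubshift (X : Set (ℕ → A)) : Prop :=
  IsSubshift X ∧ X.Nonempty ∧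
  ∀ Y ⊆ X, IsClosed Y → (∀ y ∈ Y, shift y ∈ Y) → Y = ∅ ∨ Y = X

/-- `φ` is a factor map from the subshift `X` onto the subshift `Y`:
continuous on `X`, onto `Y`, commuting with the shift. -/
def IsFactorMapOn (φ : (ℕ → A) → (ℕ → B)) (X : Set (ℕ → A)) (Y : Set (ℕ → B)) : Prop :=
  ContinuousOn φ X ∧ φ '' X = Y ∧ ∀ x ∈ X, φ (shift x) = shift (φ x)

/-- The subshifts `X` and `Y` are isomorphic: there is a bijective factor map. -/
def SubshiftIsomorphic (X : Set (ℕ → A)) (Y : Set (ℕ → B)) : Prop :=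
  ∃ φ : (ℕ → A) → (ℕ → B), IsFactorMapOn φ X Y ∧ Set.InjOn φ X

end TopoDefs

section Words

variable {A : Type*}

@[simp] lemma factorAt_length (x : ℕ → A) (i n : ℕ) : (factorAt x i n).length = n := by
  simp [factorAt]

lemma factorAt_eq_iff {x z : ℕ → A} {i j n : ℕ} :
    factorAt x i n = factorAt z j n ↔ ∀ t < n, x (i + t) = z (j + t) := by
  simp only [factorAt, List.map_inj_left, List.mem_range]

lemma factorAt_add (x : ℕ → A) (i a b : ℕ) :
    factorAt x i (a + b) = factorAt x i a ++ factorAt x (i + a) b := by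
  simp only [factorAt, List.range_add, List.map_append, List.map_map]
  congr 1
  exact List.map_congr_left fun t _ => by simp [Nat.add_assoc]

lemma factorAt_add_eq_of_eq {x z : ℕ → A} {i j n a m : ℕ}
    (h : factorAt x i n = factorAt z j n) (hm : a + m ≤ n) :
    factorAt x (i + a) m = factorAt z (j + a) m :=
  factorAt_eq_iff.2 fun t ht => by
    simpa only [Nat.add_assoc] using factorAt_eq_iff.1 h (a + t) (by omega)

lemma occursAt_factorAt (x : ℕ → A) (i n : ℕ) : OccursAt x (factorAt x i n) i := by
  rw [OccursAt, factorAt_length]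

lemma occursAt_congr {x z : ℕ → A} {u : List A} {i j n a : ℕ}
    (h : factorAt x i n = factorAt z j n) (ha : a + u.length ≤ n) :
    OccursAt x u (i + a) ↔ OccursAt z u (j + a) := by
  rw [OccursAt, OccursAt, factorAt_add_eq_of_eq h ha]

lemma UniformlyRecurrent.exists_occursAt_gt {x : ℕ → A} (hx : UniformlyRecurrent x)
    {v : List A} (hv : IsFactor x v) (a : ℕ) : ∃ k, a < k ∧ OccursAt x v k := by
  obtain ⟨g, -, hg⟩ := hx v hv
  obtain ⟨k, hk, -, hocc⟩ := hg (a + 1)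
  exact ⟨k, hk, hocc⟩

namespace LinearlyRecurrent

variable {x : ℕ → A} {K : ℕ}

lemma exists_occursAt_Ioc (hx : LinearlyRecurrent x K) {v : List A} (hv : v ≠ [])
    {j : ℕ} (hj : OccursAt x v j) : ∃ k, j < k ∧ k ≤ j + K * v.length ∧ OccursAt x v k := by
  classical
  have hex := hx.1.exists_occursAt_gt ⟨j, hj⟩ j
  obtain ⟨hjk, hk⟩ := Nat.find_spec hex
  have hret : IsReturnWord x v (factorAt x j (Nat.find hex - j)) :=
    ⟨j, _, hjk, hj, hk, fun m hjm hm hocc => Nat.find_min hex hm ⟨hjm, hocc⟩, rfl⟩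
  have hlen := hx.2 _ _ hv hret
  rw [factorAt_length] at hlen
  exact ⟨Nat.find hex, hjk, by omega, hk⟩

lemma one_le (hx : LinearlyRecurrent x K) : 1 ≤ K := by
  obtain ⟨k, hk, hkK, -⟩ := hx.exists_occursAt_Ioc (List.cons_ne_nil (x 0) []) (j := 0) rfl
  simp only [List.length_singleton, mul_one, zero_add] at hkK
  omega

lemma exists_occursAt_window (hx : LinearlyRecurrent x K) {v : List A} (hv : IsFactor x v)
    (a : ℕ) : ∃ i, a ≤ i ∧ i ≤ a + K * v.length ∧ OccursAt x v i := by
  classical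
  rcases eq_or_ne v [] with rfl | hne
  · exact ⟨a, le_rfl, by omega, rfl⟩
  obtain ⟨i₀, hi₀⟩ := hv
  -- after a first occurrence, take the occurrence following the last one up to `b`
  have late : ∀ b, i₀ ≤ b → ∃ i, b ≤ i ∧ i ≤ b + K * v.length ∧ OccursAt x v i := by
    intro b hb
    have hj : OccursAt x v (Nat.findGreatest (OccursAt x v) b) := Nat.findGreatest_spec hb hi₀
    obtain ⟨k, hjk, hk, hocc⟩ := hx.exists_occursAt_Ioc hne hj
    have hbk : b < k := by
      by_contra! h
      exact Nat.findGreatest_is_greatest hjk h hocc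
    have := Nat.findGreatest_le (P := OccursAt x v) b
    exact ⟨k, hbk.le, by omega, hocc⟩
  -- in general, the window at `a` recurs after `i₀`
  set m := K * v.length + v.length
  obtain ⟨b, hb, hbW⟩ := hx.1.exists_occursAt_gt ⟨a, occursAt_factorAt x a m⟩ i₀
  rw [OccursAt, factorAt_length] at hbW
  obtain ⟨i, hbi, hib, hi⟩ := late b hb.le
  refine ⟨a + (i - b), by omega, by omega, ?_⟩
  rw [← occursAt_congr hbW (by omega), Nat.add_sub_cancel' hbi]
  exact hi

end LinearlyRecurrent

structure IsReturnWordAt (x : ℕ → A) (u w : List A) (j : ℕ) : Prop where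
  length_pos : 0 < w.length
  occursAt_self : OccursAt x w j
  occursAt_start : OccursAt x u j
  occursAt_end : OccursAt x u (j + w.length)
  not_occursAt : ∀ t, 0 < t → t < w.length → ¬ OccursAt x u (j + t)

lemma isReturnWord_iff {x : ℕ → A} {u w : List A} :
    IsReturnWord x u w ↔ ∃ j, IsReturnWordAt x u w j := by
  constructor
  · rintro ⟨j, k, hjk, hj, hk, hmid, rfl⟩
    have hlen : (factorAt x j (k - j)).length = k - j := factorAt_length x j _
    refine ⟨j, ⟨by omega, occursAt_factorAt x j _, hj, ?_,
      fun t ht hlt => hmid _ (by omega) (by omega)⟩⟩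
    rwa [hlen, Nat.add_sub_cancel' hjk.le]
  · rintro ⟨j, hpos, hw, hj, hk, hmid⟩
    refine ⟨j, j + w.length, by omega, hj, hk, fun m hjm hm => ?_, ?_⟩
    · simpa only [Nat.add_sub_cancel' hjm.le] using hmid (m - j) (by omega) (by omega)
    · rw [Nat.add_sub_cancel_left]
      exact hw.symm

namespace IsReturnWordAt

variable {x : ℕ → A} {u w : List A} {j : ℕ}

lemma occursAt_append (h : IsReturnWordAt x u w j) : OccursAt x (w ++ u) j := by
  have hw := h.occursAt_self
  have hu := h.occursAt_end
  rw [OccursAt] at hw hu ⊢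
  rw [List.length_append, factorAt_add, hw, hu]

/-- Being a return word at `j` only depends on the factor `w ++ u` of `x` at `j`. -/
lemma of_occursAt_append (h : IsReturnWordAt x u w j) {z : ℕ → A} {i : ℕ}
    (hz : OccursAt z (w ++ u) i) : IsReturnWordAt z u w i := by
  have hagree : factorAt x j (w.length + u.length) = factorAt z i (w.length + u.length) := by
    rw [← List.length_append, h.occursAt_append, hz]
  have transfer : ∀ {v : List A} (a : ℕ), a + v.length ≤ w.length + u.length →
      (OccursAt x v (j + a) ↔ OccursAt z v (i + a)) := fun a ha => occursAt_congr hagree ha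
  refine ⟨h.length_pos, ?_, ?_, ?_, fun t ht hlt hocc => ?_⟩
  · simpa using (transfer 0 (by omega)).1 h.occursAt_self
  · simpa using (transfer 0 (by omega)).1 h.occursAt_start
  · exact (transfer _ le_rfl).1 h.occursAt_end
  · exact h.not_occursAt t ht hlt ((transfer t (by omega)).2 hocc)

lemma eq (h : IsReturnWordAt x u w j) {w' : List A} (h' : IsReturnWordAt x u w' j) :
    w = w' := by
  have hlen : w.length = w'.length := by
    by_contra hne
    rcases Nat.lt_or_gt_of_ne hne with hlt | hlt
    · exact h'.not_occursAt _ h.length_pos hlt h.occursAt_end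
    · exact h.not_occursAt _ h'.length_pos hlt h'.occursAt_end
  rw [← h.occursAt_self, ← h'.occursAt_self, hlen]

end IsReturnWordAt

lemma isReturnWord_of_mem_returnWordsOf {Y : Set (ℕ → A)} {y : ℕ → A}
    (hY : ∀ z ∈ Y, ∀ v, IsFactor z v → IsFactor y v) {u w : List A}
    (hw : w ∈ ReturnWordsOf Y u) : IsReturnWord y u w := by
  obtain ⟨z, hz, hzw⟩ := hw
  obtain ⟨j, hj⟩ := isReturnWord_iff.1 hzw
  obtain ⟨i, hi⟩ := hY z hz _ ⟨j, hj.occursAt_append⟩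
  exact isReturnWord_iff.2 ⟨i, hj.of_occursAt_append hi⟩

end Words

lemma ncard_le_of_separated {S : Set ℕ} {L n c : ℕ} (hn : 0 < n) (hS : S ⊆ Set.Iic L)
    (hsep : ∀ i ∈ S, ∀ j ∈ S, i < j → n ≤ c * (j - i)) : S.ncard ≤ c * L / n + 1 := by
  have hmono : StrictMonoOn (fun i => c * i / n) S := by
    intro i hi j hj hij
    have hcj : c * j = c * i + c * (j - i) := by rw [← Nat.mul_add, Nat.add_sub_cancel' hij.le]
    calc c * i / n < (c * i + n) / n := by rw [Nat.add_div_right _ hn]; omega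
      _ ≤ c * j / n := Nat.div_le_div_right (by have := hsep i hi j hj hij; omega)
  calc S.ncard ≤ (Set.Iic (c * L / n)).ncard :=
        Set.ncard_le_ncard_of_injOn _
          (fun i hi => Nat.div_le_div_right (Nat.mul_le_mul_left _ (hS hi))) hmono.injOn
          (Set.finite_Iic _)
    _ = c * L / n + 1 := by simp

/-- `y` is the image of `x` under a sliding block code with window `r`. -/
def IsSlidingBlockImage {A B : Type*} (x : ℕ → A) (y : ℕ → B) (r : ℕ) : Prop :=
  ∀ i j, factorAt x i r = factorAt x j r → y i = y j

namespace IsSlidingBlockImage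

variable {A B : Type*} {x : ℕ → A} {y : ℕ → B} {r K : ℕ}

lemma factorAt_eq (hxy : IsSlidingBlockImage x y r) {i j n : ℕ}
    (h : factorAt x i (n + r) = factorAt x j (n + r)) : factorAt y i n = factorAt y j n :=
  factorAt_eq_iff.2 fun _ ht => hxy _ _ (factorAt_add_eq_of_eq h (by omega))

lemma occursAt (hxy : IsSlidingBlockImage x y r) {u : List B} {i j : ℕ}
    (hj : OccursAt y u j) (h : OccursAt x (factorAt x j (u.length + r)) i) : OccursAt y u i := by
  rw [OccursAt, factorAt_length] at h
  rw [OccursAt, hxy.factorAt_eq h]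
  exact hj

variable (hxy : IsSlidingBlockImage x y r) (hx : LinearlyRecurrent x K)
include hxy hx

lemma exists_occursAt_window {u : List B} (hu : IsFactor y u) (a : ℕ) :
    ∃ i, a ≤ i ∧ i ≤ a + K * (u.length + r) ∧ OccursAt y u i := by
  obtain ⟨i₀, hi₀⟩ := hu
  obtain ⟨i, hai, hia, hi⟩ :=
    hx.exists_occursAt_window ⟨i₀, occursAt_factorAt x i₀ (u.length + r)⟩ a
  rw [factorAt_length] at hia
  exact ⟨i, hai, hia, hxy.occursAt hi₀ hi⟩

lemma uniformlyRecurrent : UniformlyRecurrent y := fun u hu =>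
  ⟨K * (u.length + r) + 1, by omega, fun a => by
    obtain ⟨i, hai, hia, hi⟩ := hxy.exists_occursAt_window hx hu a
    exact ⟨i, hai, by omega, hi⟩⟩

lemma length_le_of_isReturnWord {u w : List B} (hu : u ≠ []) (hw : IsReturnWord y u w) :
    w.length ≤ K * (u.length + r) := by
  obtain ⟨j, k, hjk, hj, hk, hmid, rfl⟩ := hw
  have hne : factorAt x j (u.length + r) ≠ [] :=
    List.ne_nil_of_length_pos (by simp [List.length_pos_iff.2 hu])
  obtain ⟨i, hji, hij, hi⟩ := hx.exists_occursAt_Ioc hne (occursAt_factorAt x j _)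
  have hki : k ≤ i := by
    by_contra! h
    exact hmid i hji h (hxy.occursAt hj hi)
  rw [factorAt_length] at hij ⊢
  omega

lemma linearlyRecurrent : LinearlyRecurrent y (K * (r + 1)) := by
  refine ⟨hxy.uniformlyRecurrent hx, fun u w hu hw => ?_⟩
  have hlen : 1 ≤ u.length := List.length_pos_iff.2 hu
  calc w.length ≤ K * (u.length + r) := hxy.length_le_of_isReturnWord hx hu hw
    _ ≤ K * ((r + 1) * u.length) := Nat.mul_le_mul_left _ (by nlinarith)
    _ = K * (r + 1) * u.length := by ring

lemma periodic_of_occursAt_add {u : List B} {j p : ℕ} (hj : OccursAt y u j)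
    (hjp : OccursAt y u (j + p)) (hlong : K * (p + 1 + r) < u.length) :
    Function.Periodic y p := by
  have hoverlap : ∀ s, j ≤ s → s < j + u.length → y (s + p) = y s := by
    intro s hjs hs
    have := factorAt_eq_iff.1 (hjp.trans hj.symm) (s - j) (by omega)
    rwa [Nat.add_right_comm, Nat.add_sub_cancel' hjs] at this
  intro t
  obtain ⟨i, hji, hij, hi⟩ :=
    hxy.exists_occursAt_window hx ⟨t, occursAt_factorAt y t (p + 1)⟩ j
  rw [factorAt_length] at hij
  rw [OccursAt, factorAt_length, factorAt_eq_iff] at hi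
  calc y (t + p) = y (i + p) := (hi p (by omega)).symm
    _ = y i := hoverlap i hji (by omega)
    _ = y t := by simpa using hi 0 (by omega)

lemma length_le_of_occursAt_add (hy : ∀ p, 0 < p → ¬ Function.Periodic y p) {u : List B}
    {j p : ℕ} (hp : 0 < p) (hj : OccursAt y u j) (hjp : OccursAt y u (j + p))
    (hlong : K * (2 * r + 1) < u.length) : u.length ≤ 2 * K * p := by
  have hle : u.length ≤ K * (p + 1 + r) := by
    by_contra! h
    exact hy p hp (hxy.periodic_of_occursAt_add hx hj hjp h)
  have hrp : r < p := by
    by_contra! h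
    have : K * (p + 1 + r) ≤ K * (2 * r + 1) := Nat.mul_le_mul_left _ (by omega)
    omega
  calc u.length ≤ K * (p + 1 + r) := hle
    _ ≤ K * (p + p) := Nat.mul_le_mul_left _ (by omega)
    _ = 2 * K * p := by ring

/-- Every return word to `u` is read at an occurrence of `u` in the initial segment of `y` of
length `K (2K + 2) |u|`, and these occurrences are `|u| / 2K` apart. -/
lemma ncard_returnWords_le (hy : ∀ p, 0 < p → ¬ Function.Periodic y p) {u : List B}
    (hr : r ≤ u.length) (hlong : K * (2 * r + 1) < u.length) :
    {w | IsReturnWord y u w}.Finite ∧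
      {w | IsReturnWord y u w}.ncard ≤ 2 * K * (2 * K + 1) ^ 2 := by
  set n := u.length
  have hn : 0 < n := by omega
  have hu₀ : u ≠ [] := List.ne_nil_of_length_pos hn
  set L := K * (2 * K + 2) * n
  set S := {i | i ≤ L ∧ OccursAt y u i}
  have hstart : ∀ w, IsReturnWord y u w → ∃ i ∈ S, IsReturnWordAt y u w i := by
    intro w hw
    have hwlen : w.length ≤ K * (n + n) :=
      (hxy.length_le_of_isReturnWord hx hu₀ hw).trans (Nat.mul_le_mul_left _ (by omega))
    obtain ⟨j, hj⟩ := isReturnWord_iff.1 hw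
    obtain ⟨i, -, hiL, hi⟩ := hxy.exists_occursAt_window hx ⟨j, hj.occursAt_append⟩ 0
    refine ⟨i, ⟨?_, (hj.of_occursAt_append hi).occursAt_start⟩, hj.of_occursAt_append hi⟩
    rw [List.length_append, zero_add] at hiL
    calc i ≤ K * (w.length + n + r) := hiL
      _ ≤ K * ((2 * K + 2) * n) := Nat.mul_le_mul_left _ (by nlinarith)
      _ = L := by ring
  choose! f hfS hf using hstart
  have hinj : Set.InjOn f {w | IsReturnWord y u w} := fun w hw w' hw' hww' =>
    (hf w hw).eq (hww' ▸ hf w' hw')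
  have hSfin : S.Finite := (Set.finite_Iic L).subset fun i hi => hi.1
  have hsep : ∀ i ∈ S, ∀ j ∈ S, i < j → n ≤ 2 * K * (j - i) := fun i hi j hj hij =>
    hxy.length_le_of_occursAt_add hx hy (by omega) hi.2
      (by rw [Nat.add_sub_cancel' hij.le]; exact hj.2) hlong
  have hL : 2 * K * L / n = 2 * K * (K * (2 * K + 2)) := by
    rw [show 2 * K * L = 2 * K * (K * (2 * K + 2)) * n by ring]
    exact Nat.mul_div_cancel _ hn
  refine ⟨Set.Finite.of_injOn hfS hinj hSfin, ?_⟩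
  calc {w | IsReturnWord y u w}.ncard ≤ S.ncard :=
        Set.ncard_le_ncard_of_injOn f hfS hinj hSfin
    _ ≤ 2 * K * L / n + 1 := ncard_le_of_separated hn (fun i hi => hi.1) hsep
    _ ≤ 2 * K * (2 * K + 1) ^ 2 := by rw [hL]; nlinarith [hx.one_le]

lemma exists_returnWord_bounds (hy : ∀ p, 0 < p → ¬ Function.Periodic y p) {Y : Set (ℕ → B)}
    (hY : ∀ z ∈ Y, ∀ v, IsFactor z v → IsFactor y v) :
    ∃ n₁ : ℕ, ∀ u ∈ LangOf Y, n₁ ≤ u.length →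
      (∀ w ∈ ReturnWordsOf Y u,
        u.length ≤ 2 * K * w.length ∧ w.length ≤ 2 * K * u.length) ∧
      (ReturnWordsOf Y u).Finite ∧
      (ReturnWordsOf Y u).ncard ≤ 2 * K * (2 * K + 1) ^ 2 := by
  refine ⟨r + K * (2 * r + 1) + 1, fun u _ hn => ?_⟩
  have hsub : ReturnWordsOf Y u ⊆ {w | IsReturnWord y u w} := fun w hw =>
    isReturnWord_of_mem_returnWordsOf hY hw
  obtain ⟨hfin, hcard⟩ :=
    hxy.ncard_returnWords_le hx hy (u := u) (by omega) (by omega)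
  refine ⟨fun w hw => ⟨?_, ?_⟩, hfin.subset hsub, (Set.ncard_le_ncard hsub hfin).trans hcard⟩
  · obtain ⟨j, hj⟩ := isReturnWord_iff.1 (hsub hw)
    exact hxy.length_le_of_occursAt_add hx hy hj.length_pos hj.occursAt_start hj.occursAt_end
      (by omega)
  · calc w.length ≤ K * (u.length + r) :=
          hxy.length_le_of_isReturnWord hx (List.ne_nil_of_length_pos (by omega)) (hsub hw)
      _ ≤ K * (u.length + u.length) := Nat.mul_le_mul_left _ (by omega)
      _ = 2 * K * u.length := by ring

end IsSlidingBlockImage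

section Topology

variable {A B : Type*}

def shiftOrbit (x : ℕ → A) : Set (ℕ → A) := Set.range fun s => shift^[s] x

lemma shift_iterate_apply (x : ℕ → A) (s t : ℕ) : shift^[s] x t = x (t + s) := by
  induction s generalizing x with
  | zero => rfl
  | succ s ih => rw [Function.iterate_succ_apply, ih]; simp only [shift, Nat.add_assoc]

lemma factorAt_shift_iterate (x : ℕ → A) (s i n : ℕ) :
    factorAt (shift^[s] x) i n = factorAt x (s + i) n :=
  factorAt_eq_iff.2 fun t _ => by rw [shift_iterate_apply]; congr 1; omega

lemma Function.Periodic.finite_shiftOrbit {y : ℕ → A} {p : ℕ} (hy : Function.Periodic y p)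
    (hp : 0 < p) : (shiftOrbit y).Finite := by
  refine ((Set.finite_Iio p).image fun s => shift^[s] y).subset ?_
  rintro _ ⟨s, rfl⟩
  refine ⟨s % p, Nat.mod_lt _ hp, funext fun t => ?_⟩
  simp only [shift_iterate_apply]
  have := hy.nat_mul (s / p) (t + s % p)
  rw [Nat.cast_id, Nat.add_assoc, Nat.mod_add_div'] at this
  exact this.symm

lemma continuous_shift [TopologicalSpace A] : Continuous (shift : (ℕ → A) → ℕ → A) :=
  continuous_pi fun n => continuous_apply (n + 1)

lemma isOpen_setOf_factorAt_eq [TopologicalSpace A] [DiscreteTopology A] (x : ℕ → A) (m : ℕ) :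
    IsOpen {z : ℕ → A | factorAt z 0 m = factorAt x 0 m} := by
  convert isOpen_set_pi (Set.finite_Iio m) fun t _ => isOpen_discrete {x t} using 1
  ext z
  simp [factorAt_eq_iff, Set.mem_pi]

lemma isFactor_of_mem_closure_shiftOrbit [TopologicalSpace A] [DiscreteTopology A]
    {y z : ℕ → A} (hz : z ∈ closure (shiftOrbit y)) {v : List A} (hv : IsFactor z v) :
    IsFactor y v := by
  obtain ⟨i, hi⟩ := hv
  obtain ⟨_, hagree, s, rfl⟩ :=
    mem_closure_iff.1 hz _ (isOpen_setOf_factorAt_eq z (i + v.length)) rfl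
  have hocc := (occursAt_congr hagree (a := i) le_rfl).2 (by rwa [zero_add])
  rw [zero_add, OccursAt, factorAt_shift_iterate] at hocc
  exact ⟨s + i, hocc⟩

lemma IsMinimalSubshift.closure_shiftOrbit [TopologicalSpace A] {X : Set (ℕ → A)}
    (hX : IsMinimalSubshift X) {x : ℕ → A} (hx : x ∈ X) : closure (shiftOrbit x) = X := by
  have hsub : shiftOrbit x ⊆ X := by
    rintro _ ⟨s, rfl⟩
    exact Set.MapsTo.iterate hX.1.2 s hx
  have hinv : ∀ z ∈ closure (shiftOrbit x), shift z ∈ closure (shiftOrbit x) := by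
    refine fun z hz => closure_mono ?_ (image_closure_subset_closure_image continuous_shift
      ⟨z, hz, rfl⟩)
    rintro _ ⟨_, ⟨s, rfl⟩, rfl⟩
    exact ⟨s + 1, Function.iterate_succ_apply' shift s x⟩
  exact (hX.2.2 _ (closure_minimal hsub hX.1.1) isClosed_closure hinv).resolve_left
    (Set.Nonempty.ne_empty ⟨x, subset_closure ⟨0, rfl⟩⟩)

/-- A Lebesgue number argument for the cover of `X` by cylinders on which `f` is constant. -/
lemma IsCompact.exists_factorAt_eq_imp_eq [TopologicalSpace A] [DiscreteTopology A]
    [TopologicalSpace B] [DiscreteTopology B] {X : Set (ℕ → A)} (hX : IsCompact X)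
    {f : (ℕ → A) → B} (hf : ContinuousOn f X) :
    ∃ r, ∀ x ∈ X, ∀ x' ∈ X, factorAt x 0 r = factorAt x' 0 r → f x = f x' := by
  have hloc : ∀ x ∈ X, ∃ r, ∀ z ∈ X, factorAt z 0 r = factorAt x 0 r → f z = f x := by
    intro x hx
    obtain ⟨U, hU, hxU, hUf⟩ :=
      mem_nhdsWithin.1 (hf x hx ((isOpen_discrete {f x}).mem_nhds rfl))
    obtain ⟨I, V, hIV, hIU⟩ := isOpen_pi_iff.1 hU x hxU
    refine ⟨I.sup id + 1, fun z hz hzx => hUf ⟨hIU fun i hi => ?_, hz⟩⟩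
    have hzi : z i = x i := by
      simpa using factorAt_eq_iff.1 hzx i (Nat.lt_succ_of_le (Finset.le_sup (f := id) hi))
    rw [hzi]
    exact (hIV i hi).2
  choose! rx hrx using hloc
  obtain ⟨t, htX, hcover⟩ := hX.elim_nhds_subcover
    (fun x => {z | factorAt z 0 (rx x) = factorAt x 0 (rx x)})
    fun x _ => (isOpen_setOf_factorAt_eq x (rx x)).mem_nhds rfl
  refine ⟨t.sup rx, fun x hx x' hx' hxx' => ?_⟩
  obtain ⟨x₁, hx₁, hxx₁⟩ := Set.mem_iUnion₂.1 (hcover hx)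
  have hle : rx x₁ ≤ t.sup rx := Finset.le_sup hx₁
  have hx'x₁ : factorAt x' 0 (rx x₁) = factorAt x₁ 0 (rx x₁) :=
    (factorAt_add_eq_of_eq hxx' (a := 0) (by omega)).symm.trans hxx₁
  rw [hrx x₁ (htX x₁ hx₁) x hx hxx₁, hrx x₁ (htX x₁ hx₁) x' hx' hx'x₁]

namespace IsFactorMapOn

variable [TopologicalSpace A] [TopologicalSpace B] {φ : (ℕ → A) → ℕ → B} {X : Set (ℕ → A)}
  {Y : Set (ℕ → B)}

lemma map_shift_iterate (hφ : IsFactorMapOn φ X Y) (hX : Set.MapsTo shift X X) {x : ℕ → A}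
    (hx : x ∈ X) (s : ℕ) : φ (shift^[s] x) = shift^[s] (φ x) := by
  induction s generalizing x with
  | zero => rfl
  | succ s ih =>
    rw [Function.iterate_succ_apply, ih (hX hx), hφ.2.2 x hx, Function.iterate_succ_apply]

lemma isSlidingBlockImage (hφ : IsFactorMapOn φ X Y) (hX : Set.MapsTo shift X X) {r : ℕ}
    (hr : ∀ x ∈ X, ∀ x' ∈ X, factorAt x 0 r = factorAt x' 0 r → φ x 0 = φ x' 0)
    {x : ℕ → A} (hx : x ∈ X) : IsSlidingBlockImage x (φ x) r := by
  have hφx : ∀ i, φ x i = φ (shift^[i] x) 0 := fun i => by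
    rw [hφ.map_shift_iterate hX hx, shift_iterate_apply, zero_add]
  intro i j hij
  rw [hφx i, hφx j]
  refine hr _ (hX.iterate i hx) _ (hX.iterate j hx) ?_
  rwa [factorAt_shift_iterate, factorAt_shift_iterate, add_zero, add_zero]

lemma subset_closure_shiftOrbit (hφ : IsFactorMapOn φ X Y) (hX : IsMinimalSubshift X)
    {x : ℕ → A} (hx : x ∈ X) : Y ⊆ closure (shiftOrbit (φ x)) := by
  rw [← hφ.2.1, ← hX.closure_shiftOrbit hx]
  refine ((hX.closure_shiftOrbit hx).symm ▸ hφ.1).image_closure.trans (closure_mono ?_)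
  rintro _ ⟨_, ⟨s, rfl⟩, rfl⟩
  exact ⟨s, (hφ.map_shift_iterate hX.1.2 hx s).symm⟩

end IsFactorMapOn

end Topology

theorem factor_of_linearly_recurrent_general {A B : Type*} [Fintype A]
    [TopologicalSpace A] [DiscreteTopology A] [TopologicalSpace B] [DiscreteTopology B]
    (X : Set (ℕ → A)) (Y : Set (ℕ → B)) (K : ℕ)
    (hX : IsMinimalSubshift X)
    (hXLR : ∃ x ∈ X, LinearlyRecurrent x K)
    (hYnp : ¬ Y.Finite)
    (hfactor : ∃ φ : (ℕ → A) → (ℕ → B), IsFactorMapOn φ X Y) :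
    (∃ K', ∃ y ∈ Y, LinearlyRecurrent y K') ∧
    ∃ n₁ : ℕ, ∀ u ∈ LangOf Y, n₁ ≤ u.length →
      (∀ w ∈ ReturnWordsOf Y u,
        u.length ≤ 2 * K * w.length ∧ w.length ≤ 2 * K * u.length) ∧
      (ReturnWordsOf Y u).Finite ∧
      (ReturnWordsOf Y u).ncard ≤ 2 * K * (2 * K + 1) ^ 2 := by
  obtain ⟨x, hxX, hx⟩ := hXLR
  obtain ⟨φ, hφ⟩ := hfactor
  obtain ⟨r, hr⟩ := hX.1.1.isCompact.exists_factorAt_eq_imp_eq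
    ((continuous_apply 0).comp_continuousOn hφ.1)
  have hxy := hφ.isSlidingBlockImage hX.1.2 hr hxX
  have hYorb := hφ.subset_closure_shiftOrbit hX hxX
  have hy : ∀ p, 0 < p → ¬ Function.Periodic (φ x) p := fun p hp hper =>
    hYnp ((hper.finite_shiftOrbit hp).subset
      ((hper.finite_shiftOrbit hp).isClosed.closure_eq ▸ hYorb))
  exact ⟨⟨_, φ x, hφ.2.1 ▸ Set.mem_image_of_mem φ hxX, hxy.linearlyRecurrent hx⟩,
    hxy.exists_returnWord_bounds hx hy fun z hz _ => isFactor_of_mem_closure_shiftOrbit (hYorb hz)⟩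

/-- **Factors of linearly recurrent subshifts.** Let `(X,T)` be a non-periodic linearly
recurrent minimal subshift with constant `K` and `(Y,T)` a non-periodic subshift factor of
`(X,T)`. Then `(Y,T)` is linearly recurrent, and there is `n₁` such that for every
`u ∈ L(Y)` with `|u| ≥ n₁`: every return word `w ∈ R_u(Y)` satisfies
`|u|/2K ≤ |w| ≤ 2K|u|`, and `#R_u(Y) ≤ 2K(2K+1)²`. -/
theorem factor_of_linearly_recurrent {A B : Type*} [Fintype A] [Fintype B]
    [TopologicalSpace A] [DiscreteTopology A] [TopologicalSpace B] [DiscreteTopology B]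
    (X : Set (ℕ → A)) (Y : Set (ℕ → B)) (K : ℕ)
    (hX : IsMinimalSubshift X) (hXnp : ¬ X.Finite)
    (hXLR : ∃ x ∈ X, LinearlyRecurrent x K)
    (hY : IsSubshift Y) (hYnp : ¬ Y.Finite)
    (hfactor : ∃ φ : (ℕ → A) → (ℕ → B), IsFactorMapOn φ X Y) :
    (∃ K', ∃ y ∈ Y, LinearlyRecurrent y K') ∧
    ∃ n₁ : ℕ, ∀ u ∈ LangOf Y, n₁ ≤ u.length →
      (∀ w ∈ ReturnWordsOf Y u,
        u.length ≤ 2 * K * w.length ∧ w.length ≤ 2 * K * u.length) ∧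
      (ReturnWordsOf Y u).Finite ∧
      (ReturnWordsOf Y u).ncard ≤ 2 * K * (2 * K + 1) ^ 2 :=
  factor_of_linearly_recurrent_general X Y K hX hXLR hYnp hfactor
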